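/- Let d be an integer with 1 ≤ d ≤ 5 and set m = 8 − d. Let a_1, …, a_m be real numbers with 0 ≤ a_1 ≤ a_2 ≤ … ≤ a_m < 1, and suppose that a_1^2 + 6 − d < a_2^2 + a_3^2 + … + a_m^2. Then there exists a real number B ≥ 0 such that E_d(a_1, …, a_m, b) < 0 for every real number b ≥ B. -/
import Mathlib


open Finset

/-- The Donaldson–Futaki polynomial `E_d` for polarizations of `𝔽₁`-type on a smooth
del Pezzo surface of degree `d`, with `m = 8 - d` parameters `a 1, …, a m` and `b`. -/
noncomputable def Epoly (d : ℕ) (a : ℕ → ℝ) (b : ℝ) : ℝ :=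
  ((d : ℝ) + 2 * b + ∑ i ∈ Finset.Icc 1 (8 - d), a i) *
      (-(2 + a 1 + b) ^ 3 - 3 * (1 - a 1) * (2 + a 1 + b) ^ 2 + (1 + b) ^ 3 +
        ∑ i ∈ Finset.Icc 2 (8 - d), (1 - a i) ^ 3) +
    3 * ((2 + a 1 + b) ^ 2 + (1 - a 1) * (2 + a 1 + b)) *
      ((d : ℝ) + 4 * b + 2 * ∑ i ∈ Finset.Icc 1 (8 - d), a i -
        ∑ i ∈ Finset.Icc 1 (8 - d), a i ^ 2)

/-- A quadratic with negative leading coefficient is eventually negative. -/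
lemma quad_eventually_neg (A C D : ℝ) (hA : A < 0) :
    ∃ B : ℝ, 0 ≤ B ∧ ∀ b : ℝ, B ≤ b → A * b ^ 2 + C * b + D < 0 := by
  refine ⟨max 1 ((|C| + |D| + 1) / (-A)), le_trans zero_le_one (le_max_left _ _), ?_⟩
  intro b hb
  have hb1 : (1 : ℝ) ≤ b := le_trans (le_max_left _ _) hb
  have hb2 : (|C| + |D| + 1) / (-A) ≤ b := le_trans (le_max_right _ _) hb
  have hA' : (0 : ℝ) < -A := by linarith
  have h2 : |C| + |D| + 1 ≤ b * (-A) := (div_le_iff₀ hA').mp hb2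
  nlinarith [le_abs_self C, neg_abs_le C, le_abs_self D, neg_abs_le D, abs_nonneg C,
    abs_nonneg D, mul_pos hA' (lt_of_lt_of_le zero_lt_one hb1)]

theorem Epoly_eventually_negative (d : ℕ) (hd1 : 1 ≤ d) (hd5 : d ≤ 5) (a : ℕ → ℝ)
    (h0 : 0 ≤ a 1)
    (hmono : ∀ i, 1 ≤ i → i < 8 - d → a i ≤ a (i + 1))
    (hlt : a (8 - d) < 1)
    (hsq : (a 1) ^ 2 + 6 - (d : ℝ) < ∑ i ∈ Finset.Icc 2 (8 - d), a i ^ 2) :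
    ∃ B : ℝ, 0 ≤ B ∧ ∀ b : ℝ, B ≤ b → Epoly d a b < 0 := by
  have hins : Finset.Icc 1 (8 - d) = insert 1 (Finset.Icc 2 (8 - d)) := by
    ext x; simp [Finset.mem_Icc, Finset.mem_insert]; omega
  have hnot : (1 : ℕ) ∉ Finset.Icc 2 (8 - d) := by simp
  set p := a 1 with hp
  set s2 := ∑ i ∈ Finset.Icc 2 (8 - d), a i with hs2
  set q2 := ∑ i ∈ Finset.Icc 2 (8 - d), a i ^ 2 with hq2
  set t := ∑ i ∈ Finset.Icc 2 (8 - d), (1 - a i) ^ 3 with ht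
  set dd := (d : ℝ) with hdd
  have hSa : ∑ i ∈ Finset.Icc 1 (8 - d), a i = p + s2 := by
    rw [hins, Finset.sum_insert hnot]
  have hSq : ∑ i ∈ Finset.Icc 1 (8 - d), a i ^ 2 = p ^ 2 + q2 := by
    rw [hins, Finset.sum_insert hnot]
  set q := p ^ 2 + q2 with hq
  set s := p + s2 with hs
  set A := 18 - 3 * dd - 3 * q + 6 * p ^ 2 with hA
  set C := 34 - 6 * dd + 2 * t - 15 * q + 9 * s + 12 * p - 3 * p * dd - 3 * p * q
      + 6 * p ^ 2 + 3 * p ^ 2 * dd + 3 * p ^ 2 * s + 4 * p ^ 3 with hC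
  set D0 := -dd + t * dd - 18 * q + 17 * s + s * t - 3 * p * dd - 9 * p * q + 6 * p * s
      + 3 * p ^ 2 * dd + 3 * p ^ 2 * s + 2 * p ^ 3 * dd + 2 * p ^ 3 * s with hD0
  have hAneg : A < 0 := by
    have : p ^ 2 + 6 - dd < q2 := hsq
    rw [hA, hq]; linarith
  obtain ⟨B, hB0, hB⟩ := quad_eventually_neg A C D0 hAneg
  refine ⟨B, hB0, fun b hb => ?_⟩
  have key : Epoly d a b = A * b ^ 2 + C * b + D0 := by
    unfold Epoly
    rw [hSa, hSq, hA, hC, hD0, hq, hs]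
    ring
  rw [key]
  exact hB b hb
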